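/- arXiv:2101.09019 — 4 statements merged into one kernel-verified Lean document; each statement's English description precedes it below -/
import Mathlib

section
/- Let h : ℝ → ℝ be defined by h(x) = −1/(√(5/(72B))·cosh(2√B·x) + 5/(12√B)) for a constant B > 0. Then h is smooth, h ∈ L²(ℝ), and h satisfies the ODE h'' − (5/6)h³ − 5√B·h² − 4B·h = 0 on ℝ. -/
open MeasureTheory

lemma aux_stmt_7 (B s a c C S : ℝ) (h1 : 12*s*c = 5) (h2 : 72*s^2*a^2 = 5)
    (hS2 : S^2 = C^2-1) (hs2 : s^2 = B) (hne : a*C+c ≠ 0) :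
    (a * (C * (2*s) * (2*s)) * (a*C+c)^2 -
      a * (S*(2*s)) * (2*(a*C+c)^1*(a*(S*(2*s))))) / (((a*C+c))^2)^2
      - 5/6*(-1/(a*C+c))^3 - 5*s*(-1/(a*C+c))^2 - 4*B*(-1/(a*C+c)) = 0 := by
  have key : 4 * s ^ 2 * a * C * (a * C + c) - 8 * s ^ 2 * a ^ 2 * S ^ 2 + 5 / 6
      - 5 * s * (a * C + c) + 4 * B * (a * C + c) ^ 2 = 0 := by
    linear_combination (s * a * C + s * c / 3 - 5 / 18) * h1 + (1 / 9) * h2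
      + (-8 * s ^ 2 * a ^ 2) * hS2 + (-4 * (a * C + c) ^ 2) * hs2
  have step : (a * (C * (2*s) * (2*s)) * (a*C+c)^2 -
      a * (S*(2*s)) * (2*(a*C+c)^1*(a*(S*(2*s))))) / (((a*C+c))^2)^2
      - 5/6*(-1/(a*C+c))^3 - 5*s*(-1/(a*C+c))^2 - 4*B*(-1/(a*C+c)) =
      (4 * s ^ 2 * a * C * (a * C + c) - 8 * s ^ 2 * a ^ 2 * S ^ 2 + 5 / 6
        - 5 * s * (a * C + c) + 4 * B * (a * C + c) ^ 2) / (a*C+c)^3 := by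
    field_simp
    ring
  rw [step, key, zero_div]

theorem stmt_7 (B : ℝ) (hB : 0 < B) :
    let h : ℝ → ℝ := fun x =>
      -1 / (Real.sqrt (5 / (72 * B)) * Real.cosh (2 * Real.sqrt B * x) + 5 / (12 * Real.sqrt B))
    ContDiff ℝ (⊤ : ℕ∞) h ∧ MemLp h 2 volume ∧
      ∀ x : ℝ,
        deriv (deriv h) x - (5 / 6) * h x ^ 3 - 5 * Real.sqrt B * h x ^ 2 - 4 * B * h x = 0 := by
  intro h
  set s : ℝ := Real.sqrt B with hs_def
  have hs : 0 < s := Real.sqrt_pos.2 hB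
  set a : ℝ := Real.sqrt (5 / (72 * B)) with ha_def
  have ha : 0 < a := Real.sqrt_pos.2 (by positivity)
  have hs2 : s ^ 2 = B := Real.sq_sqrt hB.le
  have ha2 : a ^ 2 = 5 / (72 * B) := Real.sq_sqrt (by positivity)
  set c : ℝ := 5 / (12 * s) with hc_def
  have hc : 0 < c := by positivity
  set d : ℝ → ℝ := fun x => a * Real.cosh (2 * s * x) + c with hd_def
  have hdpos : ∀ x, 0 < d x := by
    intro x
    have h1 : (1 : ℝ) ≤ Real.cosh (2 * s * x) := Real.one_le_cosh _
    have : a * 1 ≤ a * Real.cosh (2 * s * x) := by nlinarith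
    simp only [hd_def]
    nlinarith
  have hdne : ∀ x, d x ≠ 0 := fun x => (hdpos x).ne'
  have hh_eq : h = fun x => -1 / d x := rfl
  -- derivative of d
  have hd' : ∀ x : ℝ, HasDerivAt d (a * (Real.sinh (2 * s * x) * (2 * s))) x := by
    intro x
    have h1 : HasDerivAt (fun x : ℝ => 2 * s * x) (2 * s) x := by
      simpa using (hasDerivAt_id x).const_mul (2 * s)
    have h2 := (Real.hasDerivAt_cosh (2 * s * x)).comp x h1
    exact (h2.const_mul a).add_const c
  -- first derivative of h
  have hh' : ∀ x : ℝ, HasDerivAt h ((a * (Real.sinh (2 * s * x) * (2 * s))) / (d x) ^ 2) x := by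
    intro x
    have := (hasDerivAt_const x (-1 : ℝ)).div (hd' x) (hdne x)
    rw [hh_eq]
    exact this.congr_deriv (by ring)
  have hderiv1 : deriv h = fun x => (a * (Real.sinh (2 * s * x) * (2 * s))) / (d x) ^ 2 :=
    funext fun x => (hh' x).deriv
  -- second derivative
  have hh'' : ∀ x : ℝ, HasDerivAt (deriv h)
      (((a * (Real.cosh (2 * s * x) * (2 * s) * (2 * s))) * (d x) ^ 2 -
        (a * (Real.sinh (2 * s * x) * (2 * s))) *
          (2 * d x ^ 1 * (a * (Real.sinh (2 * s * x) * (2 * s))))) / ((d x) ^ 2) ^ 2) x := by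
    intro x
    rw [hderiv1]
    have h1 : HasDerivAt (fun x : ℝ => 2 * s * x) (2 * s) x := by
      simpa using (hasDerivAt_id x).const_mul (2 * s)
    have hN : HasDerivAt (fun x : ℝ => a * (Real.sinh (2 * s * x) * (2 * s)))
        (a * (Real.cosh (2 * s * x) * (2 * s) * (2 * s))) x := by
      have h2 := (Real.hasDerivAt_sinh (2 * s * x)).comp x h1
      have := (h2.mul_const (2 * s)).const_mul a
      exact this
    have hP : HasDerivAt (fun x : ℝ => (d x) ^ 2)
        (2 * d x ^ 1 * (a * (Real.sinh (2 * s * x) * (2 * s)))) x := (hd' x).pow 2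
    exact hN.div hP (pow_ne_zero 2 (hdne x))
  have hcd : ContDiff ℝ (⊤ : ℕ∞) d := by
    exact (contDiff_const.mul (Real.contDiff_cosh.comp (contDiff_const.mul contDiff_id))).add
      contDiff_const
  have hcdh : ContDiff ℝ (⊤ : ℕ∞) h := by
    rw [hh_eq]
    exact contDiff_const.div hcd hdne
  have hcont : Continuous h := hcdh.continuous
  refine ⟨hcdh, ?_, ?_⟩
  · -- Memℒp
    rw [memLp_two_iff_integrable_sq hcont.aestronglyMeasurable]
    apply LocallyIntegrable.integrable_of_isBigO_atTop_of_norm_isNegInvariant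
      (g := fun x => Real.exp (-(4 * s) * x))
    · exact ((hcont.pow 2).locallyIntegrable)
    · refine Filter.Eventually.of_forall fun x => ?_
      simp only [Function.comp_apply, hh_eq, hd_def]
      have : (2 : ℝ) * s * (-x) = -(2 * s * x) := by ring
      rw [this, Real.cosh_neg]
    · rw [Asymptotics.isBigO_iff]
      refine ⟨(2 / a) ^ 2, Filter.eventually_atTop.2 ⟨0, fun x hx => ?_⟩⟩
      have hcosh : Real.exp (2 * s * x) / 2 ≤ Real.cosh (2 * s * x) := by
        rw [Real.cosh_eq]
        have := Real.exp_pos (-(2 * s * x))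
        linarith
      have hd1 : a * Real.exp (2 * s * x) / 2 ≤ d x := by
        simp only [hd_def]
        nlinarith
      have hep : (0 : ℝ) < a * Real.exp (2 * s * x) / 2 := by positivity
      have h2 : |h x| ≤ 2 / a * (Real.exp (2 * s * x))⁻¹ := by
        rw [hh_eq]
        have : |(-1 : ℝ) / d x| = 1 / d x := by
          rw [abs_div, abs_neg, abs_one, abs_of_pos (hdpos x)]
        rw [this]
        have h3 : 1 / d x ≤ 1 / (a * Real.exp (2 * s * x) / 2) :=
          one_div_le_one_div_of_le hep hd1
        calc (1 : ℝ) / d x ≤ 1 / (a * Real.exp (2 * s * x) / 2) := h3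
          _ = 2 / a * (Real.exp (2 * s * x))⁻¹ := by
            field_simp
      have hexp : ((Real.exp (2 * s * x))⁻¹) ^ 2 = Real.exp (-(4 * s) * x) := by
        rw [← Real.exp_neg, ← Real.exp_nat_mul]
        norm_num
        ring_nf
      rw [Real.norm_eq_abs, Real.norm_eq_abs, abs_of_nonneg (Real.exp_pos _).le,
        abs_of_nonneg (sq_nonneg _)]
      calc h x ^ 2 = |h x| ^ 2 := (sq_abs _).symm
        _ ≤ (2 / a * (Real.exp (2 * s * x))⁻¹) ^ 2 := by
            apply pow_le_pow_left₀ (abs_nonneg _) h2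
        _ = (2 / a) ^ 2 * Real.exp (-(4 * s) * x) := by
            rw [mul_pow, hexp]
    · exact ⟨Set.Ioi 0, Filter.Ioi_mem_atTop 0, exp_neg_integrableOn_Ioi 0 (by positivity)⟩
  · -- ODE
    intro x
    rw [(hh'' x).deriv]
    have hhx : h x = -1 / d x := rfl
    rw [hhx]
    have h1 : 12 * s * c = 5 := by rw [hc_def]; field_simp
    have h2 : 72 * s ^ 2 * a ^ 2 = 5 := by rw [ha2, hs2]; field_simp
    exact aux_stmt_7 B s a c _ _ h1 h2 (Real.sinh_sq _) hs2 (hdne x)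
end

section
/- Let B > 0 and φ_B(x) = e^{iθ(x)}·√(k(x)) with k and θ as in the kink solution. Then |φ_B(x) − √(2√B)| ≤ C·e^{−√B·x} for all x > 0; consequently φ_B(x) → √(2√B) as x → +∞. -/
open MeasureTheory

open Set Filter in
private lemma aux_sqrt_sub {a b : ℝ} (ha : 0 ≤ a) (hab : a ≤ b) :
    Real.sqrt b - Real.sqrt a ≤ Real.sqrt (b - a) := by
  have h1 := Real.sq_sqrt ha
  have h2 := Real.sq_sqrt (sub_nonneg.2 hab)
  have h : b ≤ (Real.sqrt a + Real.sqrt (b - a)) ^ 2 := by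
    nlinarith [Real.sqrt_nonneg a, Real.sqrt_nonneg (b - a)]
  have := Real.sqrt_le_sqrt h
  rw [Real.sqrt_sq (by positivity)] at this
  linarith

open Set Filter in
private lemma aux_exp_tendsto {c : ℝ} (hc : 0 < c) :
    Tendsto (fun y : ℝ => Real.exp (-(c * y))) atTop (nhds 0) := by
  have h1 : Tendsto (fun y : ℝ => -(c * y)) atTop atBot := by
    apply Filter.tendsto_neg_atBot_iff.mpr
    exact Filter.Tendsto.const_mul_atTop hc Filter.tendsto_id
  exact Real.tendsto_exp_atBot.comp h1

open Set Filter in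
private lemma aux_exp_integral {c : ℝ} (hc : 0 < c) (x : ℝ) :
    ∫ y in Set.Ioi x, Real.exp (-(c * y)) = Real.exp (-(c * x)) / c := by
  have h := integral_Ioi_of_hasDerivAt_of_tendsto (f := fun y => -Real.exp (-(c * y)) / c)
    (f' := fun y => Real.exp (-(c * y))) (a := x) (m := 0)
    ?_ ?_ ?_ ?_
  · rw [h]; ring
  · exact (Continuous.continuousWithinAt (by fun_prop))
  · intro y _
    have : HasDerivAt (fun y => -(c * y)) (-c) y := by
      simpa using ((hasDerivAt_id y).const_mul (-c))
    have := (this.exp).neg.div_const c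
    refine this.congr_deriv ?_
    rw [div_eq_iff hc.ne']; ring
  · have := exp_neg_integrableOn_Ioi x hc
    apply this.congr_fun (fun y _ => by ring_nf) measurableSet_Ioi
  · simpa using (aux_exp_tendsto hc).neg.div_const c

open Set Filter in
private lemma aux_exp_I_sub_one (t : ℝ) : ‖Complex.exp (Complex.I * t) - 1‖ ≤ 2 * |t| := by
  by_cases h : |t| ≤ 1
  · have := Complex.norm_exp_sub_one_le (x := Complex.I * t) (by simpa [Complex.norm_exp] using h)
    simpa using this
  · push_neg at h
    have h1 : ‖Complex.exp (Complex.I * t)‖ = 1 := by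
      simp [Complex.norm_exp]
    calc ‖Complex.exp (Complex.I * t) - 1‖
        ≤ ‖Complex.exp (Complex.I * t)‖ + ‖(1 : ℂ)‖ := norm_sub_le _ _
      _ = 2 := by rw [h1]; norm_num
      _ ≤ 2 * |t| := by nlinarith

open Set Filter in
private lemma aux_main (s a b : ℝ) (hs : 0 < s) (ha : 0 < a) (hb : 0 < b)
    (hab : 1 / (2 * s) < a + b)
    (k : ℝ → ℝ) (hk : ∀ y, k y = 2 * s - 1 / (a * Real.cosh (2 * s * y) + b))
    (θ : ℝ → ℝ) (hθ : ∀ x, θ x = -∫ y in Set.Ici x, (s ^ 2 / k y - k y / 4))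
    (φ : ℝ → ℂ) (hφ : ∀ x, φ x = Complex.exp (Complex.I * θ x) * (Real.sqrt (k x) : ℂ)) :
    (∃ C : ℝ, 0 < C ∧ ∀ x : ℝ, 0 < x →
        ‖φ x - (Real.sqrt (2 * s) : ℂ)‖ ≤ C * Real.exp (-s * x))
    ∧ Filter.Tendsto φ Filter.atTop (nhds ((Real.sqrt (2 * s) : ℂ))) := by
  have hab' : 0 < a + b := by positivity
  set k₀ := 2 * s - 1 / (a + b) with hk0_def
  have hk₀ : 0 < k₀ := by
    have h1 : 1 / (a + b) < 1 / (1 / (2 * s)) := one_div_lt_one_div_of_lt (by positivity) hab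
    rw [one_div_one_div] at h1
    simp only [hk0_def]; linarith
  have hD : ∀ y : ℝ, 0 < a * Real.cosh (2 * s * y) + b := by
    intro y; have := Real.cosh_pos (x := 2 * s * y); positivity
  have hDge : ∀ y : ℝ, a + b ≤ a * Real.cosh (2 * s * y) + b := by
    intro y; nlinarith [Real.one_le_cosh (2 * s * y)]
  have hk_lo : ∀ y, k₀ ≤ k y := by
    intro y
    rw [hk]
    have := one_div_le_one_div_of_le hab' (hDge y)
    simp only [hk0_def]; linarith
  have hk_hi : ∀ y, k y ≤ 2 * s := by
    intro y
    rw [hk]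
    have h1 : 0 < 1 / (a * Real.cosh (2 * s * y) + b) := by positivity
    linarith
  have hk_pos : ∀ y, 0 < k y := fun y => lt_of_lt_of_le hk₀ (hk_lo y)
  -- exponential bound on 2s - k
  have hdiff : ∀ y, 2 * s - k y ≤ 2 / a * Real.exp (-(2 * s * y)) := by
    intro y
    rw [hk]
    have hcosh : Real.exp (2 * s * y) / 2 ≤ Real.cosh (2 * s * y) := by
      rw [Real.cosh_eq]
      have := Real.exp_pos (-(2 * s * y))
      linarith
    have h1 : a * (Real.exp (2 * s * y) / 2) ≤ a * Real.cosh (2 * s * y) + b := by nlinarith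
    have h2 := one_div_le_one_div_of_le (by positivity) h1
    have h3 : 1 / (a * (Real.exp (2 * s * y) / 2)) = 2 / a * Real.exp (-(2 * s * y)) := by
      rw [Real.exp_neg]
      field_simp
    linarith [h2, h3.symm.le]
  have hk_cont : Continuous k := by
    have : k = fun y => 2 * s - 1 / (a * Real.cosh (2 * s * y) + b) := funext hk
    rw [this]
    exact continuous_const.sub (continuous_const.div (by fun_prop) (fun y => (hD y).ne'))
  set f : ℝ → ℝ := fun y => s ^ 2 / k y - k y / 4 with hf_def
  have hf_cont : Continuous f :=
    (continuous_const.div hk_cont (fun y => (hk_pos y).ne')).sub (hk_cont.div_const 4)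
  set M : ℝ := 2 / a * (s / k₀) with hM_def
  have hM : 0 < M := by positivity
  have hf_bound : ∀ y, |f y| ≤ M * Real.exp (-(2 * s * y)) := by
    intro y
    have hky := hk_pos y
    have h1 : f y = (2 * s - k y) * (2 * s + k y) / (4 * k y) := by
      simp only [hf_def]
      field_simp
      ring
    rw [h1, abs_of_nonneg (by
      apply div_nonneg _ (by positivity)
      apply mul_nonneg (sub_nonneg.2 (hk_hi y))
      nlinarith)]
    have hrw : M * Real.exp (-(2 * s * y)) =
        (2 / a * Real.exp (-(2 * s * y))) * (4 * s) / (4 * k₀) := by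
      simp only [hM_def]
      field_simp
    rw [hrw]
    gcongr
    · exact hdiff y
    · linarith [hk_hi y, hk_pos y]
    · exact hk_lo y
  -- integrability of the dominating function
  have hg_int : ∀ x : ℝ, IntegrableOn (fun y => M * Real.exp (-(2 * s * y))) (Set.Ici x) := by
    intro x
    rw [integrableOn_Ici_iff_integrableOn_Ioi]
    have h1 := (exp_neg_integrableOn_Ioi x (by positivity : (0:ℝ) < 2 * s)).const_mul M
    exact IntegrableOn.congr_fun h1 (fun y _ => by rw [neg_mul]) measurableSet_Ioi
  have hg_val : ∀ x : ℝ, ∫ y in Set.Ici x, M * Real.exp (-(2 * s * y)) =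
      M * (Real.exp (-(2 * s * x)) / (2 * s)) := by
    intro x
    rw [integral_Ici_eq_integral_Ioi, MeasureTheory.integral_const_mul,
      aux_exp_integral (by positivity : (0:ℝ) < 2 * s)]
  have hθ_bound : ∀ x, |θ x| ≤ M / (2 * s) * Real.exp (-(2 * s * x)) := by
    intro x
    rw [hθ, abs_neg]
    have h1 := MeasureTheory.norm_integral_le_of_norm_le (f := f) (hg_int x)
      (Filter.Eventually.of_forall (fun y => by
        simpa [Real.norm_eq_abs] using hf_bound y))
    rw [hg_val x] at h1
    simp only [Real.norm_eq_abs] at h1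
    calc |∫ y in Set.Ici x, (s ^ 2 / k y - k y / 4)| = |∫ y in Set.Ici x, f y| := rfl
      _ ≤ M * (Real.exp (-(2 * s * x)) / (2 * s)) := h1
      _ = M / (2 * s) * Real.exp (-(2 * s * x)) := by ring
  set L : ℝ := Real.sqrt (2 * s) with hL_def
  have hL : 0 < L := Real.sqrt_pos.2 (by positivity)
  -- the key pointwise estimate
  have key : ∀ x : ℝ, ‖φ x - (L : ℂ)‖ ≤
      Real.sqrt (2 / a) * Real.exp (-(s * x)) +
        2 * (M / (2 * s)) * Real.exp (-(2 * s * x)) * L := by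
    intro x
    rw [hφ]
    have hsplit : Complex.exp (Complex.I * θ x) * (Real.sqrt (k x) : ℂ) - (L : ℂ) =
        Complex.exp (Complex.I * θ x) * ((Real.sqrt (k x) : ℂ) - L) +
          (Complex.exp (Complex.I * θ x) - 1) * L := by ring
    rw [hsplit]
    have hnorm_exp : ‖Complex.exp (Complex.I * (θ x : ℂ))‖ = 1 := by
      simp [Complex.norm_exp]
    have hterm1 : ‖Complex.exp (Complex.I * θ x) * ((Real.sqrt (k x) : ℂ) - L)‖ ≤
        Real.sqrt (2 / a) * Real.exp (-(s * x)) := by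
      rw [norm_mul, hnorm_exp, one_mul]
      have hco : ((Real.sqrt (k x) : ℂ) - (L : ℂ)) = ((Real.sqrt (k x) - L : ℝ) : ℂ) := by
        push_cast; ring
      rw [hco, Complex.norm_real, Real.norm_eq_abs]
      have hle : Real.sqrt (k x) ≤ L := by
        rw [hL_def]; exact Real.sqrt_le_sqrt (hk_hi x)
      rw [abs_of_nonpos (by linarith), neg_sub]
      have h1 : L - Real.sqrt (k x) ≤ Real.sqrt (2 * s - k x) := by
        rw [hL_def]; exact aux_sqrt_sub (hk_pos x).le (hk_hi x)
      have h2 : Real.sqrt (2 * s - k x) ≤ Real.sqrt (2 / a * Real.exp (-(2 * s * x))) :=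
        Real.sqrt_le_sqrt (hdiff x)
      have h3 : Real.sqrt (2 / a * Real.exp (-(2 * s * x))) =
          Real.sqrt (2 / a) * Real.exp (-(s * x)) := by
        rw [Real.sqrt_mul (by positivity)]
        congr 1
        rw [show -(2 * s * x) = -(s * x) + -(s * x) by ring, Real.exp_add,
          Real.sqrt_mul_self (Real.exp_pos _).le]
      linarith [h3 ▸ h2]
    have hterm2 : ‖(Complex.exp (Complex.I * θ x) - 1) * (L : ℂ)‖ ≤
        2 * (M / (2 * s)) * Real.exp (-(2 * s * x)) * L := by
      rw [norm_mul, Complex.norm_real, Real.norm_eq_abs, abs_of_pos hL]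
      have h1 := aux_exp_I_sub_one (θ x)
      have h2 := hθ_bound x
      have h3 : ‖Complex.exp (Complex.I * θ x) - 1‖ ≤
          2 * (M / (2 * s)) * Real.exp (-(2 * s * x)) := by
        calc ‖Complex.exp (Complex.I * θ x) - 1‖ ≤ 2 * |θ x| := h1
          _ ≤ 2 * (M / (2 * s) * Real.exp (-(2 * s * x))) := by linarith
          _ = 2 * (M / (2 * s)) * Real.exp (-(2 * s * x)) := by ring
      exact mul_le_mul_of_nonneg_right h3 hL.le
    calc ‖Complex.exp (Complex.I * θ x) * ((Real.sqrt (k x) : ℂ) - L) +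
          (Complex.exp (Complex.I * θ x) - 1) * L‖
        ≤ ‖Complex.exp (Complex.I * θ x) * ((Real.sqrt (k x) : ℂ) - L)‖ +
            ‖(Complex.exp (Complex.I * θ x) - 1) * (L : ℂ)‖ := norm_add_le _ _
      _ ≤ _ := add_le_add hterm1 hterm2
  constructor
  · refine ⟨Real.sqrt (2 / a) + 2 * (M / (2 * s)) * L, by positivity, fun x hx => ?_⟩
    have h1 := key x
    have h2 : Real.exp (-(2 * s * x)) ≤ Real.exp (-(s * x)) := by
      apply Real.exp_le_exp.2
      nlinarith
    have h3 : Real.exp (-s * x) = Real.exp (-(s * x)) := by rw [neg_mul]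
    rw [h3]
    have he := (Real.exp_pos (-(s * x))).le
    calc ‖φ x - (L : ℂ)‖ ≤ Real.sqrt (2 / a) * Real.exp (-(s * x)) +
          2 * (M / (2 * s)) * Real.exp (-(2 * s * x)) * L := h1
      _ ≤ Real.sqrt (2 / a) * Real.exp (-(s * x)) +
          2 * (M / (2 * s)) * Real.exp (-(s * x)) * L := by
            have hc : 0 ≤ 2 * (M / (2 * s)) := by positivity
            have := mul_le_mul_of_nonneg_right (mul_le_mul_of_nonneg_left h2 hc) hL.le
            linarith
      _ = (Real.sqrt (2 / a) + 2 * (M / (2 * s)) * L) * Real.exp (-(s * x)) := by ring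
  · rw [tendsto_iff_norm_sub_tendsto_zero]
    have hg0 : Filter.Tendsto (fun x : ℝ => Real.sqrt (2 / a) * Real.exp (-(s * x)) +
        2 * (M / (2 * s)) * Real.exp (-(2 * s * x)) * L) Filter.atTop (nhds 0) := by
      have t1 := (aux_exp_tendsto hs).const_mul (Real.sqrt (2 / a))
      have t2 := ((aux_exp_tendsto (by positivity : (0:ℝ) < 2 * s)).const_mul
        (2 * (M / (2 * s)))).mul_const L
      simpa using t1.add t2
    exact squeeze_zero (fun x => norm_nonneg _) key hg0

theorem stmt_10 (B : ℝ) (hB : 0 < B) :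
    let k : ℝ → ℝ := fun x =>
      2 * Real.sqrt B -
        1 / (Real.sqrt (5 / (72 * B)) * Real.cosh (2 * Real.sqrt B * x) + 5 / (12 * Real.sqrt B))
    let θ : ℝ → ℝ := fun x => -∫ y in Set.Ici x, (B / k y - k y / 4)
    let φ : ℝ → ℂ := fun x => Complex.exp (Complex.I * θ x) * (Real.sqrt (k x) : ℂ)
    (∃ C : ℝ, 0 < C ∧ ∀ x : ℝ, 0 < x →
        ‖φ x - (Real.sqrt (2 * Real.sqrt B) : ℂ)‖ ≤ C * Real.exp (-Real.sqrt B * x))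
    ∧ Filter.Tendsto φ Filter.atTop (nhds ((Real.sqrt (2 * Real.sqrt B) : ℂ))) := by
  intro k θ φ
  have hs : 0 < Real.sqrt B := Real.sqrt_pos.2 hB
  have hs2 : Real.sqrt B ^ 2 = B := Real.sq_sqrt hB.le
  have ha : 0 < Real.sqrt (5 / (72 * B)) := Real.sqrt_pos.2 (by positivity)
  have hb : 0 < 5 / (12 * Real.sqrt B) := by positivity
  have hab : 1 / (2 * Real.sqrt B) <
      Real.sqrt (5 / (72 * B)) + 5 / (12 * Real.sqrt B) := by
    have h1 : (1 : ℝ) / (144 * B) < 5 / (72 * B) := by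
      rw [div_lt_div_iff₀ (by positivity) (by positivity)]
      nlinarith
    have h2 : Real.sqrt (1 / (144 * B)) < Real.sqrt (5 / (72 * B)) :=
      Real.sqrt_lt_sqrt (by positivity) h1
    have h3 : Real.sqrt (1 / (144 * B)) = 1 / (12 * Real.sqrt B) := by
      rw [show (1 : ℝ) / (144 * B) = (1 / (12 * Real.sqrt B)) ^ 2 by
        rw [div_pow, one_pow, mul_pow, hs2]; norm_num]
      exact Real.sqrt_sq (by positivity)
    rw [h3] at h2
    have h4 : 1 / (12 * Real.sqrt B) + 5 / (12 * Real.sqrt B) = 1 / (2 * Real.sqrt B) := by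
      rw [← add_div]
      rw [div_eq_div_iff (by positivity) (by positivity)]
      ring
    linarith
  exact aux_main (Real.sqrt B) (Real.sqrt (5 / (72 * B))) (5 / (12 * Real.sqrt B))
    hs ha hb hab k (fun y => rfl) θ (fun x => by simp only [hs2]; rfl) φ (fun x => rfl)
end

section
/- Let φ : ℝ → ℂ be C² with φ'' + iφ²·conj(φ') = 0, and suppose φ(x) → 0 and φ'(x) → 0 as x → +∞. Then Im(φ'·conj(φ)) + (1/4)|φ|⁴ = 0 on all of ℝ. -/
open Complex Filter

theorem stmt_16 (φ : ℝ → ℂ) (hφ : ContDiff ℝ 2 φ)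
    (heq : ∀ x : ℝ, deriv (deriv φ) x + Complex.I * (φ x) ^ 2 * (starRingEnd ℂ) (deriv φ x) = 0)
    (hlim : Filter.Tendsto φ Filter.atTop (nhds 0))
    (hlim' : Filter.Tendsto (deriv φ) Filter.atTop (nhds 0)) :
    ∀ x : ℝ, (deriv φ x * (starRingEnd ℂ) (φ x)).im + (1 / 4) * ‖φ x‖ ^ 4 = 0 := by
  set g : ℝ → ℝ := fun x => (deriv φ x * (starRingEnd ℂ) (φ x)).im
      + (1 / 4) * ((φ x * (starRingEnd ℂ) (φ x)).re) ^ 2 with hg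
  have hφd : Differentiable ℝ φ := hφ.differentiable (by norm_num)
  have h2 : ContDiff ℝ ((1:ℕ∞)+1) φ := by norm_num; exact hφ
  have hφ'd : Differentiable ℝ (deriv φ) :=
    ((contDiff_succ_iff_deriv.mp h2).2.2).differentiable (by norm_num)
  have key : ∀ x, HasDerivAt g 0 x := by
    intro x
    have h1 : HasDerivAt φ (deriv φ x) x := hφd.differentiableAt.hasDerivAt
    have h1' : HasDerivAt (deriv φ) (deriv (deriv φ) x) x := hφ'd.differentiableAt.hasDerivAt
    have h1s : HasDerivAt (fun y => (starRingEnd ℂ) (φ y)) ((starRingEnd ℂ) (deriv φ x)) x := h1.star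
    have hA : HasDerivAt (fun y => deriv φ y * (starRingEnd ℂ) (φ y))
        (deriv (deriv φ) x * (starRingEnd ℂ) (φ x) + deriv φ x * (starRingEnd ℂ) (deriv φ x)) x :=
      h1'.mul h1s
    have hAim : HasDerivAt (fun y => (deriv φ y * (starRingEnd ℂ) (φ y)).im)
        ((deriv (deriv φ) x * (starRingEnd ℂ) (φ x) + deriv φ x * (starRingEnd ℂ) (deriv φ x)).im) x :=
      Complex.imCLM.hasFDerivAt.comp_hasDerivAt x hA
    have hB : HasDerivAt (fun y => φ y * (starRingEnd ℂ) (φ y))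
        (deriv φ x * (starRingEnd ℂ) (φ x) + φ x * (starRingEnd ℂ) (deriv φ x)) x := h1.mul h1s
    have hBre : HasDerivAt (fun y => (φ y * (starRingEnd ℂ) (φ y)).re)
        ((deriv φ x * (starRingEnd ℂ) (φ x) + φ x * (starRingEnd ℂ) (deriv φ x)).re) x :=
      Complex.reCLM.hasFDerivAt.comp_hasDerivAt x hB
    have hBp := hBre.pow 2
    have htot := hAim.add (hBp.const_mul (1/4 : ℝ))
    refine htot.congr_deriv ?_
    have hxe : deriv (deriv φ) x = -(Complex.I * (φ x) ^ 2 * (starRingEnd ℂ) (deriv φ x)) :=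
      eq_neg_of_add_eq_zero_left (heq x)
    rw [hxe]
    set a := φ x
    set b := deriv φ x
    simp only [Complex.add_im, Complex.add_re, Complex.mul_im, Complex.mul_re, Complex.neg_im,
      Complex.neg_re, Complex.conj_re, Complex.conj_im, Complex.I_re, Complex.I_im, pow_two,
      Nat.cast_ofNat, pow_one]
    ring
  have hder0 : ∀ x, deriv g x = 0 := fun x => (key x).deriv
  have hgdiff : Differentiable ℝ g := fun x => (key x).differentiableAt
  have hconst := is_const_of_deriv_eq_zero hgdiff hder0
  have t1 : Tendsto (fun y => deriv φ y * (starRingEnd ℂ) (φ y)) atTop (nhds 0) := by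
    simpa using hlim'.mul ((Complex.continuous_conj.tendsto 0).comp hlim)
  have t2 : Tendsto (fun y => φ y * (starRingEnd ℂ) (φ y)) atTop (nhds 0) := by
    simpa using hlim.mul ((Complex.continuous_conj.tendsto 0).comp hlim)
  have hgl : Tendsto g atTop (nhds 0) := by
    have i1 : Tendsto (fun y => (deriv φ y * (starRingEnd ℂ) (φ y)).im) atTop (nhds 0) := by
      simpa only [Function.comp_def, Complex.zero_im] using (Complex.continuous_im.tendsto 0).comp t1
    have i2 : Tendsto (fun y => (1/4 : ℝ) * ((φ y * (starRingEnd ℂ) (φ y)).re) ^ 2) atTop (nhds 0) := by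
      have := (((Complex.continuous_re.tendsto 0).comp t2).pow 2).const_mul (1/4 : ℝ)
      simpa only [Function.comp_def, Complex.zero_re, ne_eq, OfNat.ofNat_ne_zero,
        not_false_eq_true, zero_pow, mul_zero] using this
    simpa only [add_zero] using i1.add i2
  intro x
  have hgx : g x = 0 := by
    have hc : Tendsto g atTop (nhds (g x)) := by
      have : g = fun _ => g x := funext fun y => hconst y x
      rw [this]; exact tendsto_const_nhds
    exact tendsto_nhds_unique hc hgl
  have habs : ‖φ x‖ ^ 4 = ((φ x * (starRingEnd ℂ) (φ x)).re) ^ 2 := by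
    rw [show (4:ℕ) = 2 * 2 from rfl, pow_mul, Complex.sq_norm]
    simp [Complex.mul_conj]
  rw [habs]
  exact hgx
end

section
/- Let φ : ℝ → ℂ be C² with φ'' + iφ²·conj(φ') = 0 and φ, φ' → 0 at +∞. Then |φ'|² − (1/6)|φ|⁶ = 0 on ℝ. Consequently, if φ'(y₀) = 0 at some point y₀ then φ(y₀) = 0. -/
open Complex

theorem stmt_17 (φ : ℝ → ℂ) (hφ : ContDiff ℝ 2 φ)
    (heq : ∀ x : ℝ, deriv (deriv φ) x + Complex.I * (φ x) ^ 2 * (starRingEnd ℂ) (deriv φ x) = 0)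
    (hlim : Filter.Tendsto φ Filter.atTop (nhds 0))
    (hlim' : Filter.Tendsto (deriv φ) Filter.atTop (nhds 0)) :
    (∀ x : ℝ, ‖deriv φ x‖ ^ 2 - (1 / 6) * ‖φ x‖ ^ 6 = 0)
    ∧ (∀ y₀ : ℝ, deriv φ y₀ = 0 → φ y₀ = 0) := by
  have hφd : Differentiable ℝ φ := hφ.differentiable two_ne_zero
  have hφ'c : ContDiff ℝ 1 (deriv φ) :=
    ((contDiff_succ_iff_deriv (n := 1)).mp (by norm_num; exact hφ)).2.2
  have hφ'd : Differentiable ℝ (deriv φ) := hφ'c.differentiable one_ne_zero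
  have hre : ∀ x, HasDerivAt (fun x => (φ x).re) ((deriv φ x).re) x := fun x => by
    simpa [Function.comp_def] using Complex.reCLM.hasFDerivAt.comp_hasDerivAt x (hφd x).hasDerivAt
  have him : ∀ x, HasDerivAt (fun x => (φ x).im) ((deriv φ x).im) x := fun x => by
    simpa [Function.comp_def] using Complex.imCLM.hasFDerivAt.comp_hasDerivAt x (hφd x).hasDerivAt
  have hre' : ∀ x, HasDerivAt (fun x => (deriv φ x).re) ((deriv (deriv φ) x).re) x := fun x => by
    simpa [Function.comp_def] using Complex.reCLM.hasFDerivAt.comp_hasDerivAt x (hφ'd x).hasDerivAt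
  have him' : ∀ x, HasDerivAt (fun x => (deriv φ x).im) ((deriv (deriv φ) x).im) x := fun x => by
    simpa [Function.comp_def] using Complex.imCLM.hasFDerivAt.comp_hasDerivAt x (hφ'd x).hasDerivAt
  have hdd : ∀ x, deriv (deriv φ) x = -(Complex.I * (φ x) ^ 2 * (starRingEnd ℂ) (deriv φ x)) :=
    fun x => by linear_combination heq x
  have hddre : ∀ x, (deriv (deriv φ) x).re =
      2 * (φ x).re * (φ x).im * (deriv φ x).re - ((φ x).re ^ 2 - (φ x).im ^ 2) * (deriv φ x).im :=
    fun x => by rw [hdd x]; simp [Complex.mul_re, Complex.mul_im, pow_two]; ring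
  have hddim : ∀ x, (deriv (deriv φ) x).im =
      -(((φ x).re ^ 2 - (φ x).im ^ 2) * (deriv φ x).re) - 2 * (φ x).re * (φ x).im * (deriv φ x).im :=
    fun x => by rw [hdd x]; simp [Complex.mul_re, Complex.mul_im, pow_two]; ring
  -- limits of components
  have hre0 : Filter.Tendsto (fun x => (φ x).re) Filter.atTop (nhds 0) := by
    simpa [Function.comp_def] using (Complex.continuous_re.tendsto 0).comp hlim
  have him0 : Filter.Tendsto (fun x => (φ x).im) Filter.atTop (nhds 0) := by
    simpa [Function.comp_def] using (Complex.continuous_im.tendsto 0).comp hlim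
  have hre'0 : Filter.Tendsto (fun x => (deriv φ x).re) Filter.atTop (nhds 0) := by
    simpa [Function.comp_def] using (Complex.continuous_re.tendsto 0).comp hlim'
  have him'0 : Filter.Tendsto (fun x => (deriv φ x).im) Filter.atTop (nhds 0) := by
    simpa [Function.comp_def] using (Complex.continuous_im.tendsto 0).comp hlim'
  -- first conservation law
  set P : ℝ → ℝ := fun x => (deriv φ x).im * (φ x).re - (deriv φ x).re * (φ x).im
      + ((φ x).re ^ 2 + (φ x).im ^ 2) ^ 2 / 4 with hPdef
  have hPderiv : ∀ x, HasDerivAt P 0 x := by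
    intro x
    have H : HasDerivAt P _ x := (((him' x).mul (hre x)).sub ((hre' x).mul (him x))).add
      (((((hre x).pow 2).add ((him x).pow 2)).pow 2).div_const 4)
    convert H using 1
    rw [hddre x, hddim x]; simp only [Pi.add_apply, Pi.pow_apply]; ring
  have hPconst : ∀ x y, P x = P y := fun x y =>
    is_const_of_deriv_eq_zero (fun x => (hPderiv x).differentiableAt)
      (fun x => (hPderiv x).deriv) x y
  have hPlim : Filter.Tendsto P Filter.atTop (nhds 0) := by
    have := ((him'0.mul hre0).sub (hre'0.mul him0)).add
      ((((hre0.pow 2).add (him0.pow 2)).pow 2).div_const 4)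
    simpa using this
  have hP0 : ∀ x, P x = 0 := by
    intro x
    have h1 : Filter.Tendsto P Filter.atTop (nhds (P x)) :=
      Filter.Tendsto.congr (fun y => (hPconst x y)) tendsto_const_nhds
    exact tendsto_nhds_unique h1 hPlim
  -- second conservation law
  set E : ℝ → ℝ := fun x => (deriv φ x).re ^ 2 + (deriv φ x).im ^ 2
      - ((φ x).re ^ 2 + (φ x).im ^ 2) ^ 3 / 6 with hEdef
  have hEderiv : ∀ x, HasDerivAt E 0 x := by
    intro x
    have H : HasDerivAt E _ x := (((hre' x).pow 2).add ((him' x).pow 2)).sub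
      (((((hre x).pow 2).add ((him x).pow 2)).pow 3).div_const 6)
    convert H using 1
    have hp : (deriv φ x).im * (φ x).re - (deriv φ x).re * (φ x).im
        + ((φ x).re ^ 2 + (φ x).im ^ 2) ^ 2 / 4 = 0 := hP0 x
    rw [hddre x, hddim x]; simp only [Pi.add_apply, Pi.pow_apply]
    linear_combination (4 * ((φ x).re * (deriv φ x).re + (φ x).im * (deriv φ x).im)) * hp
  have hEconst : ∀ x y, E x = E y := fun x y =>
    is_const_of_deriv_eq_zero (fun x => (hEderiv x).differentiableAt)
      (fun x => (hEderiv x).deriv) x y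
  have hElim : Filter.Tendsto E Filter.atTop (nhds 0) := by
    have := ((hre'0.pow 2).add (him'0.pow 2)).sub
      ((((hre0.pow 2).add (him0.pow 2)).pow 3).div_const 6)
    simpa using this
  have hE0 : ∀ x, E x = 0 := by
    intro x
    have h1 : Filter.Tendsto E Filter.atTop (nhds (E x)) :=
      Filter.Tendsto.congr (fun y => (hEconst x y)) tendsto_const_nhds
    exact tendsto_nhds_unique h1 hElim
  have hE0' : ∀ x, (deriv φ x).re ^ 2 + (deriv φ x).im ^ 2
      - ((φ x).re ^ 2 + (φ x).im ^ 2) ^ 3 / 6 = 0 := hE0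
  constructor
  · intro x
    have h := hE0' x
    have h1 : ‖deriv φ x‖ ^ 2 = (deriv φ x).re ^ 2 + (deriv φ x).im ^ 2 := by
      rw [Complex.sq_norm, Complex.normSq_apply]; ring
    have h2 : ‖φ x‖ ^ 6 = ((φ x).re ^ 2 + (φ x).im ^ 2) ^ 3 := by
      have h3 : ‖φ x‖ ^ 6 = (‖φ x‖ ^ 2) ^ 3 := by ring
      rw [h3, Complex.sq_norm, Complex.normSq_apply]; ring
    rw [h1, h2]; linarith
  · intro y₀ hy
    have h := hE0' y₀
    rw [hy] at h
    simp at h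
    have h2 : (φ y₀).re ^ 2 + (φ y₀).im ^ 2 = 0 := by
      nlinarith [sq_nonneg ((φ y₀).re ^ 2 + (φ y₀).im ^ 2), sq_nonneg (φ y₀).re, sq_nonneg (φ y₀).im]
    have hr : (φ y₀).re = 0 := by nlinarith [sq_nonneg (φ y₀).re, sq_nonneg (φ y₀).im]
    have hi : (φ y₀).im = 0 := by nlinarith [sq_nonneg (φ y₀).re, sq_nonneg (φ y₀).im]
    exact Complex.ext hr hi
end
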